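/- arXiv:1902.08294 — 2 statements merged into one kernel-verified Lean document; each statement's English description precedes it below -/
import Mathlib

section
/- Suppose Assumptions A, B and C-1 hold and let (x^r, y^r) be generated by HiBSA (strongly concave case) with γ^r = 0 and constant β^r = β > 0. Then for every r ≥ 1 (where y^r is itself produced by the y-update from (x^r, y^{r−1})), ℓ(x^{r+1}, y^{r+1}) − ℓ(x^{r+1}, y^r) ≤ (1/ρ)‖y^{r+1} − y^r‖² − (θ − (1/(2ρ) + ρL_y²/2))‖y^r − y^{r−1}‖² + (ρL_y²/2)‖x^{r+1} − x^r‖². -/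
open scoped RealInnerProductSpace

abbrev Blk (N : ℕ) : Type := EuclideanSpace ℝ (Fin N)

/-- The full `x`-space `ℝ^{NK}`, with the Euclidean (ℓ²) product norm. -/
abbrev XVec (N K : ℕ) : Type := PiLp 2 (fun _ : Fin K => Blk N)

abbrev YVec (M : ℕ) : Type := EuclideanSpace ℝ (Fin M)

/-- `hibsaW xs r i = w_i^{r+1} = (x_1^{r+1},…,x_{i−1}^{r+1}, x_i^r,…,x_K^r)`. -/
noncomputable def hibsaW {N K : ℕ} (xs : ℕ → XVec N K) (r : ℕ) (i : Fin K) : XVec N K :=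
  WithLp.toLp 2 (fun j => if (j : ℕ) < (i : ℕ) then xs (r + 1) j else xs r j)

noncomputable def blockUpdate {N K : ℕ} (x : XVec N K) (i : Fin K) (z : Blk N) : XVec N K :=
  WithLp.toLp 2 (Function.update x i z)

/-! Strong concavity of `f(x^{r+1}, ·)` bounds the increase of `f` by `⟪∇_y f(x^{r+1}, y^r), y^{r+1} - y^r⟫`,
while optimality of `y^r` in its own proximal step says that
`∇_y f(x^r, y^{r-1}) - (y^r - y^{r-1}) / ρ` is a subgradient of `g` at `y^r`, which bounds the change of `g`.
What remains is the gradient mismatch `∇_y f(x^{r+1}, y^r) - ∇_y f(x^r, y^{r-1})`: its part due to the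
change of `y` is controlled by strong monotonicity and the Lipschitz bound, its part due to the change
of `x` by the Lipschitz bound alone, and Young's inequality turns the cross terms into squares. -/

open Filter Topology

theorem le_of_forall_mem_Ioo_le_add_mul {a b c : ℝ} (h : ∀ t ∈ Set.Ioo (0 : ℝ) 1, a ≤ b + t * c) :
    a ≤ b := by
  have hlim : Tendsto (fun t : ℝ => b + t * c) (𝓝[>] 0) (𝓝 b) := by
    have : Continuous fun t : ℝ => b + t * c := by fun_prop
    simpa using (this.tendsto 0).mono_left nhdsWithin_le_nhds
  refine ge_of_tendsto hlim ?_
  filter_upwards [Ioo_mem_nhdsGT one_pos] with t ht using h t ht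

section
variable {E : Type*} [NormedAddCommGroup E] [InnerProductSpace ℝ E]

theorem add_inner_le_of_isMaxOn_prox {Y : Set E} (hY : Convex ℝ Y) {g : E → ℝ}
    (hg : ConvexOn ℝ Y g) {ρ : ℝ} {d y y' u : E} (hy' : y' ∈ Y) (hu : u ∈ Y)
    (hmax : IsMaxOn (fun v => ⟪d, v - y⟫ - 1 / (2 * ρ) * ‖v - y‖ ^ 2 - g v) Y y') :
    g y' + ⟪d, u - y'⟫ ≤ g u + 1 / ρ * ⟪y' - y, u - y'⟫ := by
  -- compare `y'` with `y' + t • (u - y')` and let `t → 0`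
  refine le_of_forall_mem_Ioo_le_add_mul (c := 1 / (2 * ρ) * ‖u - y'‖ ^ 2) fun t ht => ?_
  have hz : y' + t • (u - y') ∈ Y := hY.add_smul_sub_mem hy' hu ⟨ht.1.le, ht.2.le⟩
  have hgz : g (y' + t • (u - y')) ≤ (1 - t) * g y' + t * g u := by
    rw [show y' + t • (u - y') = (1 - t) • y' + t • u by module]
    simpa only [smul_eq_mul] using hg.2 hy' hu (sub_nonneg.2 ht.2.le) ht.1.le (by ring)
  have hopt := isMaxOn_iff.1 hmax _ hz
  simp only [add_sub_right_comm y', inner_add_right, inner_smul_right, norm_add_sq_real,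
    norm_smul, Real.norm_eq_abs, mul_pow, sq_abs] at hopt
  have key : t * (g y' + ⟪d, u - y'⟫ - (g u + 1 / ρ * ⟪y' - y, u - y'⟫
      + t * (1 / (2 * ρ) * ‖u - y'‖ ^ 2))) ≤ 0 := by
    linear_combination hopt + hgz
  exact sub_nonpos.1 (nonpos_of_mul_nonpos_right key ht.1)

theorem inner_grad_sub_le_of_strongConcave {Y : Set E} {F : E → ℝ} {G : E → E} {θ : ℝ}
    (hF : ∀ y ∈ Y, ∀ z ∈ Y, F z - F y ≤ ⟪G y, z - y⟫ - θ / 2 * ‖z - y‖ ^ 2)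
    {y z : E} (hy : y ∈ Y) (hz : z ∈ Y) :
    ⟪G z - G y, z - y⟫ ≤ -(θ * ‖z - y‖ ^ 2) := by
  have h₁ := hF y hy z hz
  have h₂ := hF z hz y hy
  rw [← neg_sub z y, inner_neg_right, norm_neg] at h₂
  rw [inner_sub_left]
  linarith

theorem inner_sub_add_inner_le_of_lipschitz {Q R S y₀ y₁ y₂ : E} {L θ ρ c : ℝ} (hρ : 0 < ρ)
    (hQR : ‖Q - R‖ ≤ L * ‖y₁ - y₀‖) (hRS : ‖R - S‖ ≤ L * c)
    (hmono : ⟪Q - R, y₁ - y₀⟫ ≤ -(θ * ‖y₁ - y₀‖ ^ 2)) :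
    ⟪Q - S, y₂ - y₁⟫ + 1 / ρ * ⟪y₁ - y₀, y₂ - y₁⟫
      ≤ 1 / ρ * ‖y₂ - y₁‖ ^ 2 - (θ - (1 / (2 * ρ) + ρ * L ^ 2 / 2)) * ‖y₁ - y₀‖ ^ 2
          + ρ * L ^ 2 / 2 * c ^ 2 := by
  set a := ‖y₂ - y₁‖
  set b := ‖y₁ - y₀‖
  set v := ‖(y₂ - y₁) - (y₁ - y₀)‖
  have hsplit : ⟪Q - S, y₂ - y₁⟫
      = ⟪Q - R, (y₂ - y₁) - (y₁ - y₀)⟫ + ⟪Q - R, y₁ - y₀⟫ + ⟪R - S, y₂ - y₁⟫ := by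
    simp only [inner_sub_left, inner_sub_right]; ring
  have hQR' : ⟪Q - R, (y₂ - y₁) - (y₁ - y₀)⟫ ≤ L * b * v :=
    (real_inner_le_norm _ _).trans (mul_le_mul_of_nonneg_right hQR (norm_nonneg _))
  have hRS' : ⟪R - S, y₂ - y₁⟫ ≤ L * c * a :=
    (real_inner_le_norm _ _).trans (mul_le_mul_of_nonneg_right hRS (norm_nonneg _))
  have hv : v ^ 2 = a ^ 2 - 2 * ⟪y₁ - y₀, y₂ - y₁⟫ + b ^ 2 := by
    rw [real_inner_comm]; exact norm_sub_sq_real _ _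
  have young_b := two_mul_le_add_mul_sq (a := L * b) (b := v) hρ
  have young_c := two_mul_le_add_mul_sq (a := L * c) (b := a) hρ
  rw [hsplit]
  linear_combination hQR' + hmono + hRS' + young_b / 2 + young_c / 2 + ρ⁻¹ / 2 * hv
end

theorem hibsa_descent_y_general
    {N K M : ℕ}
    -- Assumption A
    (f : XVec N K → YVec M → ℝ)
    (Xi : Fin K → Set (Blk N))
    (Y : Set (YVec M)) (hYconv : Convex ℝ Y)
    (h : Fin K → Blk N → ℝ)
    (g : YVec M → ℝ) (hgconv : ConvexOn ℝ Set.univ g)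
    (Gfy : XVec N K → YVec M → YVec M)
    (Ly : ℝ)
    (hLy : ∀ (x x' : XVec N K) (y y' : YVec M),
      (∀ j, x j ∈ Xi j) → (∀ j, x' j ∈ Xi j) → y ∈ Y → y' ∈ Y →
      ‖Gfy x' y' - Gfy x y‖ ≤ Ly * Real.sqrt (‖x' - x‖ ^ 2 + ‖y' - y‖ ^ 2))
    -- Assumption B
    (U : Fin K → Blk N → XVec N K → YVec M → ℝ)
    -- Assumption C-1 (θ-strong concavity in y)
    (θ : ℝ) (hθ : 1 < θ)
    (hC1 : ∀ (x : XVec N K) (y z : YVec M), (∀ j, x j ∈ Xi j) → y ∈ Y → z ∈ Y →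
      f x z - f x y ≤ ⟪Gfy x y, z - y⟫ - θ / 2 * ‖z - y‖ ^ 2)
    -- HiBSA iterates (strongly concave case: γ^r = 0, β^r = β)
    (ρ β : ℝ) (hρ : 0 < ρ)
    (xs : ℕ → XVec N K) (ys : ℕ → YVec M)
    (hy0 : ys 0 ∈ Y)
    (hxup : ∀ (r : ℕ) (i : Fin K),
      xs (r + 1) i ∈ Xi i ∧
      ∀ z ∈ Xi i,
        U i (xs (r + 1) i) (hibsaW xs r i) (ys r) + h i (xs (r + 1) i)
            + β / 2 * ‖xs (r + 1) i - xs r i‖ ^ 2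
          ≤ U i z (hibsaW xs r i) (ys r) + h i z + β / 2 * ‖z - xs r i‖ ^ 2)
    (hyup : ∀ r : ℕ,
      ys (r + 1) ∈ Y ∧
      ∀ u ∈ Y,
        ⟪Gfy (xs (r + 1)) (ys r), u - ys r⟫ - 1 / (2 * ρ) * ‖u - ys r‖ ^ 2 - g u
          ≤ ⟪Gfy (xs (r + 1)) (ys r), ys (r + 1) - ys r⟫
              - 1 / (2 * ρ) * ‖ys (r + 1) - ys r‖ ^ 2 - g (ys (r + 1))) :
    -- conclusion: descent estimate on the y-update
    ∀ r : ℕ, 1 ≤ r →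
      (f (xs (r + 1)) (ys (r + 1)) + ∑ i, h i (xs (r + 1) i) - g (ys (r + 1)))
          - (f (xs (r + 1)) (ys r) + ∑ i, h i (xs (r + 1) i) - g (ys r))
        ≤ 1 / ρ * ‖ys (r + 1) - ys r‖ ^ 2
            - (θ - (1 / (2 * ρ) + ρ * Ly ^ 2 / 2)) * ‖ys r - ys (r - 1)‖ ^ 2
            + ρ * Ly ^ 2 / 2 * ‖xs (r + 1) - xs r‖ ^ 2 := by
  intro r hr
  obtain ⟨n, rfl⟩ : ∃ n, r = n + 1 := ⟨r - 1, by omega⟩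
  rw [Nat.add_sub_cancel]
  have hys : ∀ m, ys m ∈ Y := fun
    | 0 => hy0
    | m + 1 => (hyup m).1
  have hxs : ∀ m j, xs (m + 1) j ∈ Xi j := fun m j => (hxup m j).1
  have hLy_y := hLy _ _ _ _ (hxs (n + 1)) (hxs (n + 1)) (hys n) (hys (n + 1))
  have hLy_x := hLy _ _ _ _ (hxs n) (hxs (n + 1)) (hys n) (hys n)
  simp only [sub_self, norm_zero, ne_eq, OfNat.ofNat_ne_zero, not_false_eq_true, zero_pow,
    zero_add, add_zero, Real.sqrt_sq (norm_nonneg _)] at hLy_y hLy_x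
  have hmono := inner_grad_sub_le_of_strongConcave
    (fun y hy z hz => hC1 (xs (n + 1 + 1)) y z (hxs (n + 1)) hy hz) (hys n) (hys (n + 1))
  have hprox := add_inner_le_of_isMaxOn_prox hYconv (hgconv.subset (Set.subset_univ Y) hYconv)
    (hys (n + 1)) (hys (n + 1 + 1)) (isMaxOn_iff.2 (hyup n).2)
  have hconc := hC1 _ _ _ (hxs (n + 1)) (hys (n + 1)) (hys (n + 1 + 1))
  have hest := inner_sub_add_inner_le_of_lipschitz (y₂ := ys (n + 1 + 1)) hρ hLy_y hLy_x hmono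
  have hθa : 0 ≤ θ / 2 * ‖ys (n + 1 + 1) - ys (n + 1)‖ ^ 2 := by positivity
  rw [inner_sub_left] at hest
  linarith

/-- **Lemma 2 (descent on `y`)** for HiBSA in the strongly concave case: under
Assumptions A, B, C-1, with `γ^r = 0` and constant `β^r = β > 0`, for every `r ≥ 1`,
`ℓ(x^{r+1}, y^{r+1}) − ℓ(x^{r+1}, y^r) ≤ (1/ρ)‖y^{r+1} − y^r‖²
 − (θ − (1/(2ρ) + ρL_y²/2))‖y^r − y^{r−1}‖² + (ρL_y²/2)‖x^{r+1} − x^r‖²`. -/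
theorem hibsa_descent_y
    {N K M : ℕ}
    -- Assumption A
    (f : XVec N K → YVec M → ℝ)
    (Xi : Fin K → Set (Blk N)) (hXiconv : ∀ i, Convex ℝ (Xi i))
    (hXicomp : ∀ i, IsCompact (Xi i))
    (Y : Set (YVec M)) (hYconv : Convex ℝ Y) (hYcomp : IsCompact Y)
    (h : Fin K → Blk N → ℝ) (hhconv : ∀ i, ConvexOn ℝ Set.univ (h i))
    (g : YVec M → ℝ) (hgconv : ConvexOn ℝ Set.univ g)
    (Gfx : XVec N K → YVec M → XVec N K)
    (hGfx : ∀ x y, HasGradientAt (fun z => f z y) (Gfx x y) x)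
    (Gfy : XVec N K → YVec M → YVec M)
    (hGfy : ∀ x y, HasGradientAt (fun z => f x z) (Gfy x y) y)
    (Lx : Fin K → ℝ)
    (hLx : ∀ (i : Fin K) (y : YVec M), y ∈ Y → ∀ x x' : XVec N K,
      (∀ j, x j ∈ Xi j) → (∀ j, x' j ∈ Xi j) →
      ‖Gfx x' y i - Gfx x y i‖ ≤ Lx i * ‖x' - x‖)
    (Ly : ℝ)
    (hLy : ∀ (x x' : XVec N K) (y y' : YVec M),
      (∀ j, x j ∈ Xi j) → (∀ j, x' j ∈ Xi j) → y ∈ Y → y' ∈ Y →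
      ‖Gfy x' y' - Gfy x y‖ ≤ Ly * Real.sqrt (‖x' - x‖ ^ 2 + ‖y' - y‖ ^ 2))
    -- Assumption B
    (U : Fin K → Blk N → XVec N K → YVec M → ℝ)
    (GU : Fin K → Blk N → XVec N K → YVec M → Blk N)
    (hGU : ∀ i z w y, HasGradientAt (fun u => U i u w y) (GU i z w y) z)
    (μ : Fin K → ℝ) (hμpos : ∀ i, 0 < μ i)
    (hB1 : ∀ (i : Fin K) (w : XVec N K) (y : YVec M), y ∈ Y →
      ∀ z z' : Blk N, z ∈ Xi i → z' ∈ Xi i →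
      ⟪GU i z' w y, z - z'⟫ + μ i / 2 * ‖z - z'‖ ^ 2 ≤ U i z w y - U i z' w y)
    (hB2 : ∀ (i : Fin K) (x : XVec N K) (y : YVec M),
      (∀ j, x j ∈ Xi j) → y ∈ Y → GU i (x i) x y = Gfx x y i)
    (hB3 : ∀ (i : Fin K) (x : XVec N K) (y : YVec M),
      (∀ j, x j ∈ Xi j) → y ∈ Y →
      (∀ z ∈ Xi i, f (blockUpdate x i z) y ≤ U i z x y) ∧ U i (x i) x y = f x y)
    (Lu : Fin K → ℝ)
    (hB4 : ∀ (i : Fin K) (w : XVec N K) (y : YVec M) (z z' : Blk N),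
      ‖GU i z w y - GU i z' w y‖ ≤ Lu i * ‖z - z'‖)
    -- Assumption C-1 (θ-strong concavity in y)
    (θ : ℝ) (hθ : 1 < θ)
    (hC1 : ∀ (x : XVec N K) (y z : YVec M), (∀ j, x j ∈ Xi j) → y ∈ Y → z ∈ Y →
      f x z - f x y ≤ ⟪Gfy x y, z - y⟫ - θ / 2 * ‖z - y‖ ^ 2)
    -- HiBSA iterates (strongly concave case: γ^r = 0, β^r = β)
    (ρ β : ℝ) (hρ : 0 < ρ) (hβ : 0 < β)
    (xs : ℕ → XVec N K) (ys : ℕ → YVec M)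
    (hx0 : ∀ j, xs 0 j ∈ Xi j) (hy0 : ys 0 ∈ Y)
    (hxup : ∀ (r : ℕ) (i : Fin K),
      xs (r + 1) i ∈ Xi i ∧
      ∀ z ∈ Xi i,
        U i (xs (r + 1) i) (hibsaW xs r i) (ys r) + h i (xs (r + 1) i)
            + β / 2 * ‖xs (r + 1) i - xs r i‖ ^ 2
          ≤ U i z (hibsaW xs r i) (ys r) + h i z + β / 2 * ‖z - xs r i‖ ^ 2)
    (hyup : ∀ r : ℕ,
      ys (r + 1) ∈ Y ∧
      ∀ u ∈ Y,
        ⟪Gfy (xs (r + 1)) (ys r), u - ys r⟫ - 1 / (2 * ρ) * ‖u - ys r‖ ^ 2 - g u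
          ≤ ⟪Gfy (xs (r + 1)) (ys r), ys (r + 1) - ys r⟫
              - 1 / (2 * ρ) * ‖ys (r + 1) - ys r‖ ^ 2 - g (ys (r + 1))) :
    -- conclusion: descent estimate on the y-update
    ∀ r : ℕ, 1 ≤ r →
      (f (xs (r + 1)) (ys (r + 1)) + ∑ i, h i (xs (r + 1) i) - g (ys (r + 1)))
          - (f (xs (r + 1)) (ys r) + ∑ i, h i (xs (r + 1) i) - g (ys r))
        ≤ 1 / ρ * ‖ys (r + 1) - ys r‖ ^ 2
            - (θ - (1 / (2 * ρ) + ρ * Ly ^ 2 / 2)) * ‖ys r - ys (r - 1)‖ ^ 2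
            + ρ * Ly ^ 2 / 2 * ‖xs (r + 1) - xs r‖ ^ 2 :=
  hibsa_descent_y_general f Xi Y hYconv h g hgconv Gfy Ly hLy U θ hθ hC1 ρ β hρ xs ys hy0 hxup hyup
end

section
/- Suppose Assumptions A and B hold. Let y^r ∈ Y, x^r ∈ X, β^r > L_{x_i} for all i, and for each i let x_i^{r+1} = argmin_{x_i ∈ X_i} U_i(x_i; w_i^{r+1}, y^r) + h_i(x_i) + (β^r/2)‖x_i − x_i^r‖², where w_i^{r+1} := (x_1^{r+1},…,x_{i−1}^{r+1}, x_i^r,…,x_K^r). Then ℓ(x^{r+1}, y^r) − ℓ(x^r, y^r) ≤ −(β^r/2 + μ)‖x^{r+1} − x^r‖², where μ := min_i μ_i. -/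
open scoped RealInnerProductSpace

/-- `wMix x x' i = (x'_1,…,x'_{i−1}, x_i,…,x_K)`: the blocks before `i` already updated. -/
noncomputable def wMix {N K : ℕ} (x x' : XVec N K) (i : Fin K) : XVec N K :=
  WithLp.toLp 2 (fun j => if (j : ℕ) < (i : ℕ) then x' j else x j)

/-
Let `w⁽ⁱ⁾` be the point whose first `i` blocks are already updated, so that one round moves
`w⁽ⁱ⁾` to `w⁽ⁱ⁺¹⁾` along block `i` only, and `f(x') - f(x)` telescopes over these moves. For one
move with `d = x'ᵢ - xᵢ`, the descent lemma for the block-Lipschitz gradient gives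
`f(w⁽ⁱ⁺¹⁾) ≤ f(w⁽ⁱ⁾) + ⟪∇ᵢf(w⁽ⁱ⁾), d⟫ + Lᵢ/2 ‖d‖²`. Gradient consistency and strong convexity of
`Uᵢ` bound the linear term by `Uᵢ(x'ᵢ) - Uᵢ(xᵢ) - μᵢ/2 ‖d‖²`, and since `x'ᵢ` minimises the
`(μᵢ + β)`-strongly convex function `Uᵢ + hᵢ + β/2 ‖· - xᵢ‖²`, quadratic growth at the minimiser
gives `Uᵢ(x'ᵢ) + hᵢ(x'ᵢ) - Uᵢ(xᵢ) - hᵢ(xᵢ) ≤ -(μᵢ/2 + β) ‖d‖²`. Altogether the move decreases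
`f + hᵢ` by at least `(μᵢ + β - Lᵢ/2) ‖d‖² ≥ (β/2 + μ) ‖d‖²`, and the blocks add up to `‖x' - x‖²`.
-/

section StrongConvexity

variable {E : Type*} [NormedAddCommGroup E] {s : Set E} {f g : E → ℝ} {m n : ℝ}

section NormedSpace

variable [NormedSpace ℝ E]

lemma StrongConvexOn.add (hf : StrongConvexOn s m f) (hg : StrongConvexOn s n g) :
    StrongConvexOn s (m + n) (f + g) :=
  (UniformConvexOn.add hf hg).mono fun r => le_of_eq (by simp only [Pi.add_apply]; ring)

lemma StrongConvexOn.add_convexOn (hf : StrongConvexOn s m f) (hg : ConvexOn ℝ s g) :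
    StrongConvexOn s m (f + g) := by
  simpa using hf.add (strongConvexOn_zero.2 hg)

lemma StrongConvexOn.add_sq_le_of_isMinOn {a b : E} (hf : StrongConvexOn s m f)
    (hmin : IsMinOn f s b) (ha : a ∈ s) (hb : b ∈ s) : f b + m / 2 * ‖a - b‖ ^ 2 ≤ f a := by
  have hle : ∀ t ∈ Set.Ioo (0 : ℝ) 1, f b + (1 - t) * (m / 2 * ‖a - b‖ ^ 2) ≤ f a := by
    rintro t ⟨ht0, ht1⟩
    have hconv := hf.2 hb ha (by linarith : 0 ≤ 1 - t) ht0.le (by ring)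
    have hmin' := isMinOn_iff.1 hmin _ (hf.1 hb ha (by linarith : 0 ≤ 1 - t) ht0.le (by ring))
    rw [smul_eq_mul, smul_eq_mul, norm_sub_rev b a] at hconv
    have hscaled : t * (f b + (1 - t) * (m / 2 * ‖a - b‖ ^ 2)) ≤ t * f a := by linarith
    exact le_of_mul_le_mul_left hscaled ht0
  have hlim : Filter.Tendsto (fun t : ℝ => f b + (1 - t) * (m / 2 * ‖a - b‖ ^ 2))
      (nhdsWithin 0 (Set.Ioi 0)) (nhds (f b + m / 2 * ‖a - b‖ ^ 2)) := by
    have hcont : Continuous fun t : ℝ => f b + (1 - t) * (m / 2 * ‖a - b‖ ^ 2) := by fun_prop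
    simpa using (hcont.tendsto 0).mono_left nhdsWithin_le_nhds
  exact le_of_tendsto hlim (Filter.mem_of_superset (Ioo_mem_nhdsGT one_pos) hle)

end NormedSpace

section InnerProductSpace

variable [InnerProductSpace ℝ E]

lemma strongConvexOn_of_inner_add_le (hs : Convex ℝ s) (G : E → E)
    (hf : ∀ x ∈ s, ∀ y ∈ s, ⟪G y, x - y⟫ + m / 2 * ‖x - y‖ ^ 2 ≤ f x - f y) :
    StrongConvexOn s m f := by
  refine ⟨hs, fun x hx y hy a b ha hb hab => ?_⟩
  set z := a • x + b • y
  have hz : z ∈ s := hs hx hy ha hb hab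
  obtain rfl : a = 1 - b := by linarith
  have hxz : x - z = b • (x - y) := by module
  have hyz : y - z = -((1 - b) • (x - y)) := by module
  have hx' := hf x hx z hz
  have hy' := hf y hy z hz
  rw [hxz, norm_smul, real_inner_smul_right, Real.norm_of_nonneg hb] at hx'
  rw [hyz, norm_neg, norm_smul, inner_neg_right, real_inner_smul_right,
    Real.norm_of_nonneg ha] at hy'
  simp only [smul_eq_mul]
  linear_combination (1 - b) * hx' + b * hy'

lemma strongConvexOn_mul_norm_sub_sq (hs : Convex ℝ s) (m : ℝ) (c : E) :
    StrongConvexOn s m fun x => m / 2 * ‖x - c‖ ^ 2 := by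
  rw [strongConvexOn_iff_convex]
  have haffine : (fun x => m / 2 * ‖x - c‖ ^ 2 - m / 2 * ‖x‖ ^ 2) =
      fun x => m / 2 * ‖c‖ ^ 2 + (-m • innerₛₗ ℝ c) x := by
    ext x; simp [norm_sub_sq_real, real_inner_comm]; ring
  rw [haffine]
  exact (convexOn_const _ hs).add ((-m • innerₛₗ ℝ c).convexOn hs)

lemma StrongConvexOn.prox_sub_le {a b : E} (hf : StrongConvexOn s m f) (hg : ConvexOn ℝ s g)
    (hmin : IsMinOn (fun z => f z + g z + n / 2 * ‖z - a‖ ^ 2) s b) (ha : a ∈ s) (hb : b ∈ s) :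
    f b + g b - (f a + g a) ≤ -(m / 2 + n) * ‖b - a‖ ^ 2 := by
  have hprox : StrongConvexOn s (m + n) fun z => f z + g z + n / 2 * ‖z - a‖ ^ 2 :=
    (hf.add_convexOn hg).add (strongConvexOn_mul_norm_sub_sq hf.1 n a)
  have hgrowth := hprox.add_sq_le_of_isMinOn hmin ha hb
  rw [sub_self, norm_zero, norm_sub_rev a b] at hgrowth
  linarith

end InnerProductSpace

end StrongConvexity

section Descent

variable {E : Type*} [NormedAddCommGroup E] [InnerProductSpace ℝ E] [CompleteSpace E]
  {f : E → ℝ} {G : E → E}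

lemma image_add_le_of_inner_gradient_sub_le (hf : ∀ x, HasGradientAt f (G x) x) (w e : E)
    (L : ℝ) (hL : ∀ t ∈ Set.Icc (0 : ℝ) 1, ⟪G (w + t • e) - G w, e⟫ ≤ L * t) :
    f (w + e) ≤ f w + ⟪G w, e⟫ + L / 2 := by
  have hline : ∀ t : ℝ, HasDerivAt (fun s : ℝ => f (w + s • e)) ⟪G (w + t • e), e⟫ t := by
    intro t
    have hpath : HasDerivAt (fun s : ℝ => w + s • e) e t := by
      simpa using ((hasDerivAt_id t).smul_const e).const_add w
    simpa [InnerProductSpace.toDual_apply_apply, Function.comp_def] using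
      (hf (w + t • e)).hasFDerivAt.comp_hasDerivAt t hpath
  set φ : ℝ → ℝ := fun t => f (w + t • e) - t * ⟪G w, e⟫ - L / 2 * t ^ 2
  have hφ : ∀ t : ℝ, HasDerivAt φ (⟪G (w + t • e), e⟫ - ⟪G w, e⟫ - L * t) t := fun t =>
    (((hline t).sub ((hasDerivAt_id t).mul_const ⟪G w, e⟫)).sub
      ((hasDerivAt_pow 2 t).const_mul (L / 2))).congr_deriv (by simp; ring)
  have hanti : AntitoneOn φ (Set.Icc 0 1) := by
    refine antitoneOn_of_deriv_nonpos (convex_Icc 0 1)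
      (fun t _ => (hφ t).continuousAt.continuousWithinAt)
      (fun t _ => (hφ t).differentiableAt.differentiableWithinAt) fun t ht => ?_
    rw [interior_Icc] at ht
    have hslope := hL t (Set.Ioo_subset_Icc_self ht)
    rw [inner_sub_left] at hslope
    rw [(hφ t).deriv]
    linarith
  have h01 := hanti (Set.left_mem_Icc.2 zero_le_one) (Set.right_mem_Icc.2 zero_le_one) zero_le_one
  norm_num [φ] at h01
  linarith

end Descent

section Blocks

variable {ι : Type*} [Fintype ι] [DecidableEq ι] {F : Type*} [NormedAddCommGroup F]
  [InnerProductSpace ℝ F]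

lemma PiLp.inner_single_right (x : PiLp 2 fun _ : ι => F) (i : ι) (d : F) :
    ⟪x, PiLp.single 2 i d⟫ = ⟪x i, d⟫ := by
  rw [PiLp.inner_apply, Finset.sum_eq_single i (fun j _ hj => by
    rw [PiLp.single_eq_of_ne 2 hj, inner_zero_right]) (by simp), PiLp.single_eq_same]

variable [CompleteSpace F] {f : (PiLp 2 fun _ : ι => F) → ℝ}
  {G : (PiLp 2 fun _ : ι => F) → PiLp 2 fun _ : ι => F} {S : Set (PiLp 2 fun _ : ι => F)}
  {w : PiLp 2 fun _ : ι => F} {i : ι} {L : ℝ}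

lemma image_add_single_le (hf : ∀ x, HasGradientAt f (G x) x) (hS : Convex ℝ S) {d : F}
    (hw : w ∈ S) (hwd : w + PiLp.single 2 i d ∈ S)
    (hL : ∀ x ∈ S, ∀ x' ∈ S, ‖G x' i - G x i‖ ≤ L * ‖x' - x‖) :
    f (w + PiLp.single 2 i d) ≤ f w + ⟪G w i, d⟫ + L / 2 * ‖d‖ ^ 2 := by
  set e : PiLp 2 (fun _ : ι => F) := PiLp.single 2 i d
  have hsegment : ∀ t ∈ Set.Icc (0 : ℝ) 1, ⟪G (w + t • e) - G w, e⟫ ≤ L * ‖d‖ ^ 2 * t := by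
    intro t ht
    calc ⟪G (w + t • e) - G w, e⟫ = ⟪G (w + t • e) i - G w i, d⟫ := by
          rw [PiLp.inner_single_right, PiLp.sub_apply]
      _ ≤ ‖G (w + t • e) i - G w i‖ * ‖d‖ := real_inner_le_norm _ _
      _ ≤ L * ‖t • e‖ * ‖d‖ := by
          gcongr
          exact (hL w hw _ (hS.add_smul_mem hw hwd ht)).trans_eq (by rw [add_sub_cancel_left])
      _ = L * ‖d‖ ^ 2 * t := by
          rw [norm_smul, PiLp.norm_single, Real.norm_of_nonneg ht.1]; ring
  have hdescent := image_add_le_of_inner_gradient_sub_le hf w e _ hsegment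
  rw [PiLp.inner_single_right] at hdescent
  linarith

lemma block_prox_update_decrease (hf : ∀ x, HasGradientAt f (G x) x) (hS : Convex ℝ S)
    (hw : w ∈ S) {b : F} (hwb : w + PiLp.single 2 i (b - w i) ∈ S)
    (hL : ∀ x ∈ S, ∀ x' ∈ S, ‖G x' i - G x i‖ ≤ L * ‖x' - x‖)
    {T : Set F} {u h : F → ℝ} {Gu : F → F} {μ β : ℝ} (hT : Convex ℝ T)
    (hu : ∀ z ∈ T, ∀ z' ∈ T, ⟪Gu z', z - z'⟫ + μ / 2 * ‖z - z'‖ ^ 2 ≤ u z - u z')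
    (hGu : Gu (w i) = G w i) (hh : ConvexOn ℝ T h)
    (hmin : IsMinOn (fun z => u z + h z + β / 2 * ‖z - w i‖ ^ 2) T b)
    (hwT : w i ∈ T) (hbT : b ∈ T) :
    f (w + PiLp.single 2 i (b - w i)) + h b - (f w + h (w i))
      ≤ -(μ + β - L / 2) * ‖b - w i‖ ^ 2 := by
  have hdescent := image_add_single_le hf hS hw hwb hL
  have hlinear := hu b hbT (w i) hwT
  have hprox := (strongConvexOn_of_inner_add_le hT Gu hu).prox_sub_le hh hmin hwT hbT
  rw [hGu] at hlinear
  linarith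

end Blocks

section PartialUpdate

variable {K : ℕ} {F : Type*} (x x' : PiLp 2 fun _ : Fin K => F)

/-- Indexed by `ℕ` so that the fully updated point `partialUpdate x x' K = x'` is included;
`wMix x x' i` is `partialUpdate x x' i` by definition. -/
noncomputable def partialUpdate (n : ℕ) : PiLp 2 fun _ : Fin K => F :=
  WithLp.toLp 2 fun j => if (j : ℕ) < n then x' j else x j

@[simp]
lemma partialUpdate_apply (n : ℕ) (j : Fin K) :
    partialUpdate x x' n j = if (j : ℕ) < n then x' j else x j := rfl

lemma partialUpdate_zero : partialUpdate x x' 0 = x := by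
  ext j : 1; simp

lemma partialUpdate_card : partialUpdate x x' K = x' := by
  ext j : 1; simp

lemma partialUpdate_apply_self (i : Fin K) : partialUpdate x x' i i = x i := by
  simp

lemma partialUpdate_succ [SeminormedAddCommGroup F] (i : Fin K) :
    partialUpdate x x' (i + 1) = partialUpdate x x' i + PiLp.single 2 i (x' i - x i) := by
  ext j : 1
  rcases lt_trichotomy (j : ℕ) i with hji | hji | hji
  · rw [PiLp.add_apply, partialUpdate_apply, partialUpdate_apply,
      if_pos (hji.trans (Nat.lt_succ_self _)), if_pos hji,
      PiLp.single_eq_of_ne 2 (Fin.ne_of_val_ne hji.ne), add_zero]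
  · obtain rfl := Fin.ext hji
    rw [PiLp.add_apply, partialUpdate_apply, partialUpdate_apply, if_pos (Nat.lt_succ_self _),
      if_neg (lt_irrefl _), PiLp.single_eq_same, add_sub_cancel]
  · rw [PiLp.add_apply, partialUpdate_apply, partialUpdate_apply,
      if_neg (Nat.succ_le_of_lt hji).not_gt, if_neg hji.not_gt,
      PiLp.single_eq_of_ne 2 (Fin.ne_of_val_ne hji.ne'), add_zero]

lemma sum_partialUpdate_succ_sub {R : Type*} [AddCommGroup R]
    (φ : (PiLp 2 fun _ : Fin K => F) → R) :
    ∑ i : Fin K, (φ (partialUpdate x x' (i + 1)) - φ (partialUpdate x x' i)) = φ x' - φ x := by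
  rw [Fin.sum_univ_eq_sum_range (fun n => φ (partialUpdate x x' (n + 1)) -
      φ (partialUpdate x x' n)), Finset.sum_range_sub (fun n => φ (partialUpdate x x' n)),
    partialUpdate_zero, partialUpdate_card]

lemma partialUpdate_mem {X : Fin K → Set F} (hx : ∀ j, x j ∈ X j) (hx' : ∀ j, x' j ∈ X j)
    (n : ℕ) (j : Fin K) : partialUpdate x x' n j ∈ X j := by
  rw [partialUpdate_apply]
  split_ifs
  exacts [hx' j, hx j]

end PartialUpdate

lemma PiLp.convex_setOf_forall_apply_mem {ι : Type*} {F : Type*} [NormedAddCommGroup F]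
    [NormedSpace ℝ F] {X : ι → Set F} (hX : ∀ j, Convex ℝ (X j)) :
    Convex ℝ {z : PiLp 2 fun _ : ι => F | ∀ j, z j ∈ X j} :=
  fun _ hx _ hy _ _ ha hb hab j => hX j (hx j) (hy j) ha hb hab

theorem hibsa_sufficient_decrease_x_general
    {N K M : ℕ}
    -- Assumption A
    (f : XVec N K → YVec M → ℝ)
    (Xi : Fin K → Set (Blk N)) (hXiconv : ∀ i, Convex ℝ (Xi i))
    (Y : Set (YVec M))
    (h : Fin K → Blk N → ℝ) (hhconv : ∀ i, ConvexOn ℝ Set.univ (h i))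
    (g : YVec M → ℝ)
    (Gfx : XVec N K → YVec M → XVec N K)
    (hGfx : ∀ x y, HasGradientAt (fun z => f z y) (Gfx x y) x)
    (Lx : Fin K → ℝ)
    (hLx : ∀ (i : Fin K) (y : YVec M), y ∈ Y → ∀ x x' : XVec N K,
      (∀ j, x j ∈ Xi j) → (∀ j, x' j ∈ Xi j) →
      ‖Gfx x' y i - Gfx x y i‖ ≤ Lx i * ‖x' - x‖)
    -- Assumption B
    (U : Fin K → Blk N → XVec N K → YVec M → ℝ)
    (GU : Fin K → Blk N → XVec N K → YVec M → Blk N)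
    (μ : Fin K → ℝ)
    (μmin : ℝ) (hμmin : μmin = ⨅ i, μ i)
    (hB1 : ∀ (i : Fin K) (w : XVec N K) (y : YVec M), y ∈ Y →
      ∀ z z' : Blk N, z ∈ Xi i → z' ∈ Xi i →
      ⟪GU i z' w y, z - z'⟫ + μ i / 2 * ‖z - z'‖ ^ 2 ≤ U i z w y - U i z' w y)
    (hB2 : ∀ (i : Fin K) (x : XVec N K) (y : YVec M),
      (∀ j, x j ∈ Xi j) → y ∈ Y → GU i (x i) x y = Gfx x y i)
    -- one round of HiBSA x-updates with proximal parameter βr > L_{xᵢ}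
    (βr : ℝ) (hβr : ∀ i, Lx i < βr)
    (x x' : XVec N K) (y : YVec M)
    (hxfeas : ∀ j, x j ∈ Xi j) (hy : y ∈ Y)
    (hup : ∀ i : Fin K,
      x' i ∈ Xi i ∧
      ∀ z ∈ Xi i,
        U i (x' i) (wMix x x' i) y + h i (x' i) + βr / 2 * ‖x' i - x i‖ ^ 2
          ≤ U i z (wMix x x' i) y + h i z + βr / 2 * ‖z - x i‖ ^ 2) :
    -- conclusion: sufficient decrease
    (f x' y + ∑ i, h i (x' i) - g y) - (f x y + ∑ i, h i (x i) - g y)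
      ≤ -(βr / 2 + μmin) * ‖x' - x‖ ^ 2 := by
  set S := {z : XVec N K | ∀ j, z j ∈ Xi j}
  have hx' : ∀ j, x' j ∈ Xi j := fun j => (hup j).1
  have hw : ∀ n, partialUpdate x x' n ∈ S := partialUpdate_mem x x' hxfeas hx'
  have hblock : ∀ i : Fin K, f (partialUpdate x x' (i + 1)) y + h i (x' i)
      - (f (partialUpdate x x' i) y + h i (x i)) ≤ -(βr / 2 + μmin) * ‖x' i - x i‖ ^ 2 := by
    intro i
    set w := partialUpdate x x' i
    have hdecrease := block_prox_update_decrease (fun z => hGfx z y)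
      (PiLp.convex_setOf_forall_apply_mem hXiconv) (hw i) (b := x' i)
      (by rw [partialUpdate_apply_self, ← partialUpdate_succ]; exact hw (i + 1))
      (fun z hz z' hz' => hLx i y hy z z' hz hz') (hXiconv i)
      (u := fun z => U i z w y) (Gu := fun z => GU i z w y) (β := βr)
      (fun z hz z' hz' => hB1 i w y hy z z' hz hz') (hB2 i w y (hw i) hy)
      ((hhconv i).subset (Set.subset_univ _) (hXiconv i))
      (by rw [partialUpdate_apply_self]; exact isMinOn_iff.2 (hup i).2)
      (by rw [partialUpdate_apply_self]; exact hxfeas i) (hx' i)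
    rw [partialUpdate_apply_self, ← partialUpdate_succ] at hdecrease
    have hμi : μmin ≤ μ i := hμmin ▸ ciInf_le (Finite.bddBelow_range μ) i
    have hcoeff : βr / 2 + μmin ≤ μ i + βr - Lx i / 2 := by linarith [hβr i]
    linarith [mul_le_mul_of_nonneg_right hcoeff (sq_nonneg ‖x' i - x i‖)]
  calc (f x' y + ∑ i, h i (x' i) - g y) - (f x y + ∑ i, h i (x i) - g y)
      = ∑ i : Fin K, (f (partialUpdate x x' (i + 1)) y + h i (x' i)
          - (f (partialUpdate x x' i) y + h i (x i))) := by
        simp only [add_sub_add_comm, Finset.sum_add_distrib,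
          sum_partialUpdate_succ_sub x x' (f · y), Finset.sum_sub_distrib]
        ring
    _ ≤ ∑ i : Fin K, -(βr / 2 + μmin) * ‖x' i - x i‖ ^ 2 :=
        Finset.sum_le_sum fun i _ => hblock i
    _ = -(βr / 2 + μmin) * ‖x' - x‖ ^ 2 := by
        rw [← Finset.mul_sum, PiLp.norm_sq_eq_of_L2]
        simp only [PiLp.sub_apply]

/-- Per-round sufficient decrease of the `x`-blocks (concave case): under Assumptions A
and B, if `β^r > L_{xᵢ}` for all `i` and `x'` is produced from `(x, y)` by one round of
HiBSA block updates with proximal parameter `β^r`, then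
`ℓ(x', y) − ℓ(x, y) ≤ −(β^r/2 + μ)‖x' − x‖²`, where `μ = minᵢ μᵢ`. -/
theorem hibsa_sufficient_decrease_x
    {N K M : ℕ} [NeZero K]
    -- Assumption A
    (f : XVec N K → YVec M → ℝ)
    (Xi : Fin K → Set (Blk N)) (hXiconv : ∀ i, Convex ℝ (Xi i))
    (hXicomp : ∀ i, IsCompact (Xi i))
    (Y : Set (YVec M)) (hYconv : Convex ℝ Y) (hYcomp : IsCompact Y)
    (h : Fin K → Blk N → ℝ) (hhconv : ∀ i, ConvexOn ℝ Set.univ (h i))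
    (g : YVec M → ℝ) (hgconv : ConvexOn ℝ Set.univ g)
    (Gfx : XVec N K → YVec M → XVec N K)
    (hGfx : ∀ x y, HasGradientAt (fun z => f z y) (Gfx x y) x)
    (Lx : Fin K → ℝ)
    (hLx : ∀ (i : Fin K) (y : YVec M), y ∈ Y → ∀ x x' : XVec N K,
      (∀ j, x j ∈ Xi j) → (∀ j, x' j ∈ Xi j) →
      ‖Gfx x' y i - Gfx x y i‖ ≤ Lx i * ‖x' - x‖)
    -- Assumption B
    (U : Fin K → Blk N → XVec N K → YVec M → ℝ)
    (GU : Fin K → Blk N → XVec N K → YVec M → Blk N)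
    (hGU : ∀ i z w y, HasGradientAt (fun u => U i u w y) (GU i z w y) z)
    (μ : Fin K → ℝ) (hμpos : ∀ i, 0 < μ i)
    (μmin : ℝ) (hμmin : μmin = ⨅ i, μ i)
    (hB1 : ∀ (i : Fin K) (w : XVec N K) (y : YVec M), y ∈ Y →
      ∀ z z' : Blk N, z ∈ Xi i → z' ∈ Xi i →
      ⟪GU i z' w y, z - z'⟫ + μ i / 2 * ‖z - z'‖ ^ 2 ≤ U i z w y - U i z' w y)
    (hB2 : ∀ (i : Fin K) (x : XVec N K) (y : YVec M),
      (∀ j, x j ∈ Xi j) → y ∈ Y → GU i (x i) x y = Gfx x y i)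
    (hB3 : ∀ (i : Fin K) (x : XVec N K) (y : YVec M),
      (∀ j, x j ∈ Xi j) → y ∈ Y →
      (∀ z ∈ Xi i, f (blockUpdate x i z) y ≤ U i z x y) ∧ U i (x i) x y = f x y)
    (Lu : Fin K → ℝ)
    (hB4 : ∀ (i : Fin K) (w : XVec N K) (y : YVec M) (z z' : Blk N),
      ‖GU i z w y - GU i z' w y‖ ≤ Lu i * ‖z - z'‖)
    -- one round of HiBSA x-updates with proximal parameter βr > L_{xᵢ}
    (βr : ℝ) (hβr : ∀ i, Lx i < βr)
    (x x' : XVec N K) (y : YVec M)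
    (hxfeas : ∀ j, x j ∈ Xi j) (hy : y ∈ Y)
    (hup : ∀ i : Fin K,
      x' i ∈ Xi i ∧
      ∀ z ∈ Xi i,
        U i (x' i) (wMix x x' i) y + h i (x' i) + βr / 2 * ‖x' i - x i‖ ^ 2
          ≤ U i z (wMix x x' i) y + h i z + βr / 2 * ‖z - x i‖ ^ 2) :
    -- conclusion: sufficient decrease
    (f x' y + ∑ i, h i (x' i) - g y) - (f x y + ∑ i, h i (x i) - g y)
      ≤ -(βr / 2 + μmin) * ‖x' - x‖ ^ 2 :=
  hibsa_sufficient_decrease_x_general f Xi hXiconv Y h hhconv g Gfx hGfx Lx hLx U GU μ μmin hμmin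
    hB1 hB2 βr hβr x x' y hxfeas hy hup
end
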